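/- arXiv:2602.14486 — 5 statements merged into one kernel-verified Lean document; each statement's English description precedes it below -/
import Mathlib

section
/- Let X be an n×d_x real random matrix and Y an n×d_y real random matrix whose rows (x_i, y_i), i = 1,…,n, are i.i.d., with E[x_i] = 0, E[y_i] = 0, Cov(x_i) = I_{d_x}, Cov(y_i) = I_{d_y}, and with x_i independent of y_i. Let H = I_n − (1/n)𝟙𝟙ᵀ be the centering matrix and define the sample cross-covariance C̃ = (1/(n−1)) Xᵀ H Y ∈ ℝ^{d_x×d_y}. Then E[‖C̃‖_F²] = d_x d_y / (n−1). -/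
open MeasureTheory ProbabilityTheory Matrix

/-- **Non-vanishing null interaction energy.**
Let `X` be an `n × dx` and `Y` an `n × dy` real random matrix whose rows
`(xᵢ, yᵢ)` are i.i.d., with `E[xᵢ] = 0`, `E[yᵢ] = 0`, `Cov(xᵢ) = I`, `Cov(yᵢ) = I`,
and with the `X`-rows independent of the `Y`-rows.  With `H = I − (1/n) 𝟙𝟙ᵀ` the
centering matrix and `C̃ = (1/(n−1)) Xᵀ H Y`, we have
`E[‖C̃‖_F²] = dx · dy / (n−1)`. -/
theorem null_interaction_energy
    {Ω : Type*} [MeasurableSpace Ω] (μ : Measure Ω) [IsProbabilityMeasure μ]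
    (n dx dy : ℕ) (hn : 2 ≤ n)
    (X : Ω → Fin n → Fin dx → ℝ) (Y : Ω → Fin n → Fin dy → ℝ)
    (hXmeas : Measurable X) (hYmeas : Measurable Y)
    -- the rows (xᵢ, yᵢ), i = 1,…,n, are independent …
    (h_rows_indep : iIndepFun
      (fun i ω => ((X ω i, Y ω i) : (Fin dx → ℝ) × (Fin dy → ℝ))) μ)
    -- … and identically distributed
    (h_rows_ident : ∀ i j : Fin n,
      IdentDistrib (fun ω => ((X ω i, Y ω i) : (Fin dx → ℝ) × (Fin dy → ℝ)))
        (fun ω => ((X ω j, Y ω j) : (Fin dx → ℝ) × (Fin dy → ℝ))) μ μ)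
    -- square-integrable entries
    (hXL2 : ∀ i a, MemLp (fun ω => X ω i a) 2 μ)
    (hYL2 : ∀ i b, MemLp (fun ω => Y ω i b) 2 μ)
    -- mean zero
    (hXmean : ∀ i a, ∫ ω, X ω i a ∂μ = 0)
    (hYmean : ∀ i b, ∫ ω, Y ω i b ∂μ = 0)
    -- identity covariance
    (hXcov : ∀ i a a', ∫ ω, X ω i a * X ω i a' ∂μ = if a = a' then 1 else 0)
    (hYcov : ∀ i b b', ∫ ω, Y ω i b * Y ω i b' ∂μ = if b = b' then 1 else 0)
    -- the family of X-rows is independent of the family of Y-rows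
    (hXY : IndepFun X Y μ) :
    ∫ ω, ∑ a : Fin dx, ∑ b : Fin dy,
        (((n : ℝ) - 1)⁻¹ •
            ((Matrix.of (X ω))ᵀ *
              ((1 : Matrix (Fin n) (Fin n) ℝ) -
                (n : ℝ)⁻¹ • (Matrix.of (fun _ _ => (1 : ℝ)) : Matrix (Fin n) (Fin n) ℝ)) *
              Matrix.of (Y ω)) : Matrix (Fin dx) (Fin dy) ℝ) a b ^ 2 ∂μ
      = (dx : ℝ) * (dy : ℝ) / ((n : ℝ) - 1) := by
  classical
  have h2 : (2 : ℝ) ≤ (n : ℝ) := by exact_mod_cast hn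
  have hne : (n : ℝ) - 1 ≠ 0 := by linarith
  have hnne : (n : ℝ) ≠ 0 := by linarith
  set c : ℝ := ((n : ℝ) - 1)⁻¹ with hc
  set H : Matrix (Fin n) (Fin n) ℝ :=
    (1 : Matrix (Fin n) (Fin n) ℝ) -
      (n : ℝ)⁻¹ • (Matrix.of (fun _ _ => (1 : ℝ)) : Matrix (Fin n) (Fin n) ℝ) with hHdef
  have hH : ∀ i j, H i j = (if i = j then (1 : ℝ) else 0) - (n : ℝ)⁻¹ := by
    intro i j
    simp [hHdef, Matrix.sub_apply, Matrix.one_apply, Matrix.smul_apply, Matrix.of_apply]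
  -- measurability of entries
  have hXm : ∀ i a, Measurable fun ω => X ω i a := fun i a =>
    (measurable_pi_apply a).comp ((measurable_pi_apply i).comp hXmeas)
  have hYm : ∀ j b, Measurable fun ω => Y ω j b := fun j b =>
    (measurable_pi_apply b).comp ((measurable_pi_apply j).comp hYmeas)
  -- independence of distinct X-entries, Y-entries
  have hXindep : ∀ i k : Fin n, ∀ a, i ≠ k →
      IndepFun (fun ω => X ω i a) (fun ω => X ω k a) μ := by
    intro i k a hik
    have h := h_rows_indep.indepFun hik
    exact h.comp (φ := fun p : (Fin dx → ℝ) × (Fin dy → ℝ) => p.1 a)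
      (ψ := fun p : (Fin dx → ℝ) × (Fin dy → ℝ) => p.1 a)
      ((measurable_pi_apply a).comp measurable_fst)
      ((measurable_pi_apply a).comp measurable_fst)
  have hYindep : ∀ j l : Fin n, ∀ b, j ≠ l →
      IndepFun (fun ω => Y ω j b) (fun ω => Y ω l b) μ := by
    intro j l b hjl
    have h := h_rows_indep.indepFun hjl
    exact h.comp (φ := fun p : (Fin dx → ℝ) × (Fin dy → ℝ) => p.2 b)
      (ψ := fun p : (Fin dx → ℝ) × (Fin dy → ℝ) => p.2 b)
      ((measurable_pi_apply b).comp measurable_snd)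
      ((measurable_pi_apply b).comp measurable_snd)
  -- second moments
  have hXint : ∀ i k : Fin n, ∀ a, ∫ ω, X ω i a * X ω k a ∂μ = if i = k then 1 else 0 := by
    intro i k a
    by_cases hik : i = k
    · subst hik; simp [hXcov i a a]
    · rw [(hXindep i k a hik).integral_fun_mul_eq_mul_integral (hXm i a).aestronglyMeasurable
        (hXm k a).aestronglyMeasurable, hXmean i a, hXmean k a]
      simp [hik]
  have hYint : ∀ j l : Fin n, ∀ b, ∫ ω, Y ω j b * Y ω l b ∂μ = if j = l then 1 else 0 := by
    intro j l b
    by_cases hjl : j = l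
    · subst hjl; simp [hYcov j b b]
    · rw [(hYindep j l b hjl).integral_fun_mul_eq_mul_integral (hYm j b).aestronglyMeasurable
        (hYm l b).aestronglyMeasurable, hYmean j b, hYmean l b]
      simp [hjl]
  -- integrability of pair products
  have hXmul : ∀ i k : Fin n, ∀ a, Integrable (fun ω => X ω i a * X ω k a) μ := by
    intro i k a
    by_cases hik : i = k
    · subst hik
      simpa [sq] using (hXL2 i a).integrable_sq
    · exact (hXindep i k a hik).integrable_mul ((hXL2 i a).integrable one_le_two)
        ((hXL2 k a).integrable one_le_two)
  have hYmul : ∀ j l : Fin n, ∀ b, Integrable (fun ω => Y ω j b * Y ω l b) μ := by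
    intro j l b
    by_cases hjl : j = l
    · subst hjl
      simpa [sq] using (hYL2 j b).integrable_sq
    · exact (hYindep j l b hjl).integrable_mul ((hYL2 j b).integrable one_le_two)
        ((hYL2 l b).integrable one_le_two)
  -- independence of X-products and Y-products
  have hXYind : ∀ i k : Fin n, ∀ j l : Fin n, ∀ a b,
      IndepFun (fun ω => X ω i a * X ω k a) (fun ω => Y ω j b * Y ω l b) μ := by
    intro i k j l a b
    exact hXY.comp (φ := fun v : Fin n → Fin dx → ℝ => v i a * v k a)
      (ψ := fun v : Fin n → Fin dy → ℝ => v j b * v l b)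
      (by fun_prop)
      (by fun_prop)
  -- integrability and integral of the four-fold products
  have hint : ∀ i k j l : Fin n, ∀ a b, Integrable
      (fun ω => (X ω i a * X ω k a) * (Y ω j b * Y ω l b)) μ :=
    fun i k j l a b => (hXYind i k j l a b).integrable_mul (hXmul i k a) (hYmul j l b)
  have hterm : ∀ i k j l : Fin n, ∀ a b,
      ∫ ω, (X ω i a * X ω k a) * (Y ω j b * Y ω l b) ∂μ
        = (if i = k then (1 : ℝ) else 0) * (if j = l then (1 : ℝ) else 0) := by
    intro i k j l a b
    rw [(hXYind i k j l a b).integral_fun_mul_eq_mul_integral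
      ((hXm i a).mul (hXm k a)).aestronglyMeasurable
      ((hYm j b).mul (hYm l b)).aestronglyMeasurable, hXint, hYint]
  -- the entry of the matrix, expanded
  have h1 : ∀ ω : Ω, ∀ a b,
      (c • ((Matrix.of (X ω))ᵀ * H * Matrix.of (Y ω))) a b
        = c * ∑ j, ∑ i, X ω i a * H i j * Y ω j b := by
    intro ω a b
    simp only [Matrix.smul_apply, smul_eq_mul, Matrix.mul_apply, Matrix.transpose_apply,
      Matrix.of_apply, Finset.sum_mul]
  -- the squared entry as a sum over quadruples
  have hfun : ∀ a b, ∀ ω : Ω,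
      ((c • ((Matrix.of (X ω))ᵀ * H * Matrix.of (Y ω))) a b) ^ 2
        = ∑ q : Fin n × Fin n × Fin n × Fin n,
            (c ^ 2 * H q.2.2.1 q.1 * H q.2.2.2 q.2.1) *
              ((X ω q.2.2.1 a * X ω q.2.2.2 a) * (Y ω q.1 b * Y ω q.2.1 b)) := by
    intro a b ω
    rw [h1 ω a b]
    simp only [Fintype.sum_prod_type]
    rw [mul_pow, pow_two (∑ j : Fin n, ∑ i : Fin n, X ω i a * H i j * Y ω j b),
      Finset.sum_mul_sum]
    rw [Finset.mul_sum]
    refine Finset.sum_congr rfl fun j _ => ?_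
    rw [Finset.mul_sum]
    refine Finset.sum_congr rfl fun l _ => ?_
    rw [Finset.sum_mul_sum, Finset.mul_sum]
    refine Finset.sum_congr rfl fun i _ => ?_
    rw [Finset.mul_sum]
    refine Finset.sum_congr rfl fun k _ => ?_
    ring
  -- integral of a single squared entry
  have key : ∀ a b, ∫ ω, ((c • ((Matrix.of (X ω))ᵀ * H * Matrix.of (Y ω))) a b) ^ 2 ∂μ = c := by
    intro a b
    simp only [hfun a b]
    rw [integral_finset_sum _ fun q _ =>
      ((hint q.2.2.1 q.2.2.2 q.1 q.2.1 a b).const_mul _)]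
    have : ∀ q : Fin n × Fin n × Fin n × Fin n,
        ∫ ω, (c ^ 2 * H q.2.2.1 q.1 * H q.2.2.2 q.2.1) *
            ((X ω q.2.2.1 a * X ω q.2.2.2 a) * (Y ω q.1 b * Y ω q.2.1 b)) ∂μ
          = (c ^ 2 * H q.2.2.1 q.1 * H q.2.2.2 q.2.1) *
              ((if q.2.2.1 = q.2.2.2 then (1:ℝ) else 0) *
               (if q.1 = q.2.1 then (1:ℝ) else 0)) := by
      intro q
      rw [integral_const_mul, hterm]
    simp only [this]
    rw [Fintype.sum_prod_type]
    simp only [Fintype.sum_prod_type]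
    -- collapse the Kronecker deltas
    have hcollapse : ∀ j : Fin n, (∑ l : Fin n, ∑ i : Fin n, ∑ k : Fin n,
        (c ^ 2 * H i j * H k l) *
          ((if i = k then (1:ℝ) else 0) * (if j = l then (1:ℝ) else 0)))
        = ∑ i : Fin n, c ^ 2 * (H i j * H i j) := by
      intro j
      rw [Finset.sum_comm]
      refine Finset.sum_congr rfl fun i _ => ?_
      rw [Finset.sum_comm]
      have : ∀ k : Fin n, (∑ l : Fin n, (c ^ 2 * H i j * H k l) *
          ((if i = k then (1:ℝ) else 0) * (if j = l then (1:ℝ) else 0)))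
          = (if i = k then (1:ℝ) else 0) * (c ^ 2 * H i j * H k j) := by
        intro k
        rw [Finset.sum_eq_single j]
        · by_cases h : i = k <;> simp [h] <;> ring
        · intro l _ hlj
          simp [Ne.symm hlj]
        · simp
      simp only [this]
      rw [Finset.sum_eq_single i]
      · simp; ring
      · intro k _ hki
        simp [Ne.symm hki]
      · simp
    simp only [hcollapse]
    -- evaluate the remaining sum
    have hHsq : ∀ j : Fin n, (∑ i : Fin n, c ^ 2 * (H i j * H i j))
        = c ^ 2 * (1 - (n : ℝ)⁻¹) := by
      intro j
      rw [← Finset.mul_sum]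
      congr 1
      have : ∀ i : Fin n, H i j * H i j
          = (if i = j then (1:ℝ) else 0) - 2 * (n:ℝ)⁻¹ * (if i = j then (1:ℝ) else 0)
            + (n:ℝ)⁻¹ * (n:ℝ)⁻¹ := by
        intro i
        rw [hH]
        by_cases h : i = j <;> simp [h] <;> ring
      simp only [this, Finset.sum_add_distrib, Finset.sum_sub_distrib, ← Finset.mul_sum,
        Finset.sum_ite_eq', Finset.mem_univ, if_pos, Finset.sum_const, Finset.card_univ,
        Fintype.card_fin, nsmul_eq_mul]
      field_simp
      ring
    simp only [hHsq, Finset.sum_const, Finset.card_univ, Fintype.card_fin, nsmul_eq_mul]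
    rw [hc]
    field_simp
  -- assemble
  have hintsq : ∀ a b, Integrable
      (fun ω => ((c • ((Matrix.of (X ω))ᵀ * H * Matrix.of (Y ω))) a b) ^ 2) μ := by
    intro a b
    have := integrable_finset_sum (μ := μ) Finset.univ
      (f := fun (q : Fin n × Fin n × Fin n × Fin n) ω =>
        (c ^ 2 * H q.2.2.1 q.1 * H q.2.2.2 q.2.1) *
          ((X ω q.2.2.1 a * X ω q.2.2.2 a) * (Y ω q.1 b * Y ω q.2.1 b)))
      (fun q _ => (hint q.2.2.1 q.2.2.2 q.1 q.2.1 a b).const_mul _)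
    refine this.congr ?_
    exact Filter.Eventually.of_forall fun ω => (hfun a b ω).symm
  rw [integral_finset_sum _ fun a _ => integrable_finset_sum _ fun b _ => hintsq a b]
  have : ∀ a : Fin dx, ∫ ω, ∑ b : Fin dy,
      ((c • ((Matrix.of (X ω))ᵀ * H * Matrix.of (Y ω))) a b) ^ 2 ∂μ = ∑ b : Fin dy, c := by
    intro a
    rw [integral_finset_sum _ fun b _ => hintsq a b]
    exact Finset.sum_congr rfl fun b _ => key a b
  simp only [this, Finset.sum_const, Finset.card_univ, Fintype.card_fin, nsmul_eq_mul]
  simp only [hc]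
  field_simp
end

section
/- Let X be an n×d_x real random matrix and Y an n×d_y real random matrix whose rows (x_i, y_i) are i.i.d., with E[x_i] = 0, E[y_i] = 0, Cov(x_i) = I_{d_x}, Cov(y_i) = I_{d_y}, and x_i independent of y_i. Let C̃ = (1/(n−1)) Xᵀ H Y where H = I_n − (1/n)𝟙𝟙ᵀ. Then for every entry index (a,b), E[C̃_{ab}²] = 1/(n−1). -/
open MeasureTheory ProbabilityTheory Matrix
open scoped ENNReal

lemma aux_mul_int {Ω : Type*} [MeasurableSpace Ω] {μ : Measure Ω}
    {f g : Ω → ℝ} (hf : MemLp f 2 μ) (hg : MemLp g 2 μ) :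
    Integrable (fun ω => f ω * g ω) μ := by
  rw [← memLp_one_iff_integrable]
  have h : (1 : ℝ≥0∞)/1 = 1/2 + 1/2 := by
    rw [ENNReal.div_add_div_same, one_add_one_eq_two,
      ENNReal.div_self two_ne_zero ENNReal.ofNat_ne_top, div_one]
  haveI : ENNReal.HolderTriple 2 2 1 := ⟨by simpa only [one_div] using h.symm⟩
  exact hg.smul hf


/-- **Entrywise null second moment of the sample cross-covariance.**
Under the same hypotheses as the null-interaction-energy proposition, every entry
`C̃_{ab}` of `C̃ = (1/(n−1)) Xᵀ H Y` satisfies `E[C̃_{ab}²] = 1/(n−1)`. -/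
theorem null_cross_covariance_entry
    {Ω : Type*} [MeasurableSpace Ω] (μ : Measure Ω) [IsProbabilityMeasure μ]
    (n dx dy : ℕ) (hn : 2 ≤ n)
    (X : Ω → Fin n → Fin dx → ℝ) (Y : Ω → Fin n → Fin dy → ℝ)
    (hXmeas : Measurable X) (hYmeas : Measurable Y)
    -- the rows (xᵢ, yᵢ), i = 1,…,n, are independent …
    (h_rows_indep : iIndepFun
      (fun i ω => ((X ω i, Y ω i) : (Fin dx → ℝ) × (Fin dy → ℝ))) μ)
    -- … and identically distributed
    (h_rows_ident : ∀ i j : Fin n,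
      IdentDistrib (fun ω => ((X ω i, Y ω i) : (Fin dx → ℝ) × (Fin dy → ℝ)))
        (fun ω => ((X ω j, Y ω j) : (Fin dx → ℝ) × (Fin dy → ℝ))) μ μ)
    -- square-integrable entries
    (hXL2 : ∀ i a, MemLp (fun ω => X ω i a) 2 μ)
    (hYL2 : ∀ i b, MemLp (fun ω => Y ω i b) 2 μ)
    -- mean zero
    (hXmean : ∀ i a, ∫ ω, X ω i a ∂μ = 0)
    (hYmean : ∀ i b, ∫ ω, Y ω i b ∂μ = 0)
    -- identity covariance
    (hXcov : ∀ i a a', ∫ ω, X ω i a * X ω i a' ∂μ = if a = a' then 1 else 0)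
    (hYcov : ∀ i b b', ∫ ω, Y ω i b * Y ω i b' ∂μ = if b = b' then 1 else 0)
    -- the family of X-rows is independent of the family of Y-rows
    (hXY : IndepFun X Y μ) :
    ∀ (a : Fin dx) (b : Fin dy),
      ∫ ω,
        ((((n : ℝ) - 1)⁻¹ •
            ((Matrix.of (X ω))ᵀ *
              ((1 : Matrix (Fin n) (Fin n) ℝ) -
                (n : ℝ)⁻¹ • (Matrix.of (fun _ _ => (1 : ℝ)) : Matrix (Fin n) (Fin n) ℝ)) *
              Matrix.of (Y ω)) : Matrix (Fin dx) (Fin dy) ℝ) a b) ^ 2 ∂μ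
        = 1 / ((n : ℝ) - 1) := by
  intro a b
  have hn0 : (n : ℝ) ≠ 0 := by positivity
  have hn1 : (n : ℝ) - 1 ≠ 0 := by
    have : (2:ℝ) ≤ (n:ℝ) := by exact_mod_cast hn
    nlinarith
  set c : ℝ := ((n : ℝ) - 1)⁻¹ with hc
  set h : Fin n → Fin n → ℝ := fun i j => (if i = j then 1 else 0) - (n : ℝ)⁻¹ with hh
  set S : Ω → ℝ := fun ω => ∑ i, ∑ j, h i j * (X ω i a * Y ω j b) with hS
  -- measurability of entries
  have hXm : ∀ i (a : Fin dx), Measurable (fun ω => X ω i a) := fun i a =>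
    (measurable_pi_apply a).comp ((measurable_pi_apply i).comp hXmeas)
  have hYm : ∀ i (b : Fin dy), Measurable (fun ω => Y ω i b) := fun i b =>
    (measurable_pi_apply b).comp ((measurable_pi_apply i).comp hYmeas)
  -- the matrix entry equals c * S ω
  have hentry : ∀ ω,
      ((((n : ℝ) - 1)⁻¹ •
          ((Matrix.of (X ω))ᵀ *
            ((1 : Matrix (Fin n) (Fin n) ℝ) -
              (n : ℝ)⁻¹ • (Matrix.of (fun _ _ => (1 : ℝ)) : Matrix (Fin n) (Fin n) ℝ)) *
            Matrix.of (Y ω)) : Matrix (Fin dx) (Fin dy) ℝ) a b) = c * S ω := by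
    intro ω
    simp only [Matrix.smul_apply, Matrix.mul_apply, Matrix.transpose_apply, Matrix.of_apply,
      Matrix.sub_apply, Matrix.one_apply, smul_eq_mul, hS, hh]
    congr 1
    rw [Finset.sum_comm]
    refine Finset.sum_congr rfl fun i _ => ?_
    rw [Finset.sum_mul]
    refine Finset.sum_congr rfl fun j _ => ?_
    ring
  -- E[X_ia X_ka] = δ_ik
  have hXprod : ∀ i k : Fin n, ∫ ω, X ω i a * X ω k a ∂μ = if i = k then 1 else 0 := by
    intro i k
    by_cases hik : i = k
    · subst hik; simp [hXcov i a a]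
    · have hind : IndepFun (fun ω => X ω i a) (fun ω => X ω k a) μ := by
        have h2 := h_rows_indep.indepFun hik
        have hm : Measurable (fun p : (Fin dx → ℝ) × (Fin dy → ℝ) => p.1 a) :=
          (measurable_pi_apply a).comp (measurable_fst (α := Fin dx → ℝ) (β := Fin dy → ℝ))
        exact h2.comp hm hm
      have := hind.integral_mul_eq_mul_integral (hXm i a).aestronglyMeasurable (hXm k a).aestronglyMeasurable
      rw [show (∫ ω, X ω i a * X ω k a ∂μ)
          = integral μ ((fun ω => X ω i a) * fun ω => X ω k a) from rfl,
        this, hXmean i a, hXmean k a]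
      simp [hik]
  have hYprod : ∀ j l : Fin n, ∫ ω, Y ω j b * Y ω l b ∂μ = if j = l then 1 else 0 := by
    intro j l
    by_cases hjl : j = l
    · subst hjl; simp [hYcov j b b]
    · have hind : IndepFun (fun ω => Y ω j b) (fun ω => Y ω l b) μ := by
        have h2 := h_rows_indep.indepFun hjl
        have hm : Measurable (fun p : (Fin dx → ℝ) × (Fin dy → ℝ) => p.2 b) :=
          (measurable_pi_apply b).comp (measurable_snd (α := Fin dx → ℝ) (β := Fin dy → ℝ))
        exact h2.comp hm hm
      have := hind.integral_mul_eq_mul_integral (hYm j b).aestronglyMeasurable (hYm l b).aestronglyMeasurable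
      rw [show (∫ ω, Y ω j b * Y ω l b ∂μ)
          = integral μ ((fun ω => Y ω j b) * fun ω => Y ω l b) from rfl,
        this, hYmean j b, hYmean l b]
      simp [hjl]
  -- independence of X-side and Y-side products
  have hindXY : ∀ i k j l : Fin n,
      IndepFun (fun ω => X ω i a * X ω k a) (fun ω => Y ω j b * Y ω l b) μ := by
    intro i k j l
    exact hXY.comp
      (((measurable_pi_apply a).comp (measurable_pi_apply i)).mul
        ((measurable_pi_apply a).comp (measurable_pi_apply k)))
      (((measurable_pi_apply b).comp (measurable_pi_apply j)).mul
        ((measurable_pi_apply b).comp (measurable_pi_apply l)))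
  -- the quadruple-product terms
  set F : ((Fin n × Fin n) × (Fin n × Fin n)) → Ω → ℝ :=
    fun p ω => (h p.1.1 p.2.1 * h p.1.2 p.2.2) *
      ((X ω p.1.1 a * X ω p.1.2 a) * (Y ω p.2.1 b * Y ω p.2.2 b)) with hF
  have hFint : ∀ p, Integrable (F p) μ := by
    rintro ⟨⟨i, k⟩, ⟨j, l⟩⟩
    refine Integrable.const_mul ?_ _
    have hf : Integrable (fun ω => X ω i a * X ω k a) μ := aux_mul_int (hXL2 i a) (hXL2 k a)
    have hg : Integrable (fun ω => Y ω j b * Y ω l b) μ := aux_mul_int (hYL2 j b) (hYL2 l b)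
    exact (hindXY i k j l).integrable_mul hf hg
  have hFval : ∀ p, ∫ ω, F p ω ∂μ =
      (h p.1.1 p.2.1 * h p.1.2 p.2.2) *
        ((if p.1.1 = p.1.2 then (1:ℝ) else 0) * (if p.2.1 = p.2.2 then (1:ℝ) else 0)) := by
    rintro ⟨⟨i, k⟩, ⟨j, l⟩⟩
    simp only [hF]
    rw [integral_const_mul]
    congr 1
    have := (hindXY i k j l).integral_mul_eq_mul_integral
      (((hXm i a).mul (hXm k a)).aestronglyMeasurable)
      (((hYm j b).mul (hYm l b)).aestronglyMeasurable)
    rw [show (∫ ω, (X ω i a * X ω k a) * (Y ω j b * Y ω l b) ∂μ)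
        = integral μ ((fun ω => X ω i a * X ω k a) * fun ω => Y ω j b * Y ω l b) from rfl,
      this, hXprod i k, hYprod j l]
  -- S² expands as the sum of the F p's
  have hS2 : ∀ ω, S ω ^ 2 = ∑ p : (Fin n × Fin n) × (Fin n × Fin n), F p ω := by
    intro ω
    rw [Fintype.sum_prod_type]
    simp_rw [Fintype.sum_prod_type]
    rw [sq, hS]
    rw [Finset.sum_mul_sum]
    refine Finset.sum_congr rfl fun i _ => Finset.sum_congr rfl fun k _ => ?_
    rw [Finset.sum_mul_sum]
    refine Finset.sum_congr rfl fun j _ => Finset.sum_congr rfl fun l _ => ?_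
    simp only [hF]
    ring
  -- integral of S²
  have hIS2 : ∫ ω, S ω ^ 2 ∂μ = ((n : ℝ) - 1) := by
    calc ∫ ω, S ω ^ 2 ∂μ = ∫ ω, ∑ p : (Fin n × Fin n) × (Fin n × Fin n), F p ω ∂μ := by
          exact integral_congr_ae (Filter.Eventually.of_forall hS2)
      _ = ∑ p : (Fin n × Fin n) × (Fin n × Fin n), ∫ ω, F p ω ∂μ := by
          exact integral_finset_sum _ fun p _ => hFint p
      _ = ∑ p : (Fin n × Fin n) × (Fin n × Fin n),
            (h p.1.1 p.2.1 * h p.1.2 p.2.2) *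
              ((if p.1.1 = p.1.2 then (1:ℝ) else 0) * (if p.2.1 = p.2.2 then (1:ℝ) else 0)) := by
          exact Finset.sum_congr rfl fun p _ => hFval p
      _ = ∑ i : Fin n, ∑ j : Fin n, h i j ^ 2 := by
          rw [Fintype.sum_prod_type]
          simp_rw [Fintype.sum_prod_type]
          simp only [mul_ite, mul_one, mul_zero, ite_mul, zero_mul]
          simp [Finset.sum_ite_eq, sq]
      _ = ((n : ℝ) - 1) := by
          have hrow : ∀ i : Fin n, ∑ j : Fin n, h i j ^ 2 = 1 - (n : ℝ)⁻¹ := by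
            intro i
            have hterm : ∀ j, h i j ^ 2 =
                (if i = j then (1:ℝ) else 0) - 2 * (n:ℝ)⁻¹ * (if i = j then 1 else 0)
                  + (n:ℝ)⁻¹ ^ 2 := by
              intro j
              by_cases hij : i = j <;> simp [hh, hij] <;> ring
            simp_rw [hterm]
            rw [Finset.sum_add_distrib, Finset.sum_sub_distrib]
            simp only [mul_ite, mul_one, mul_zero, Finset.sum_ite_eq, Finset.mem_univ,
              if_true, Finset.sum_const, Finset.card_univ, Fintype.card_fin, nsmul_eq_mul]
            field_simp
            ring
          simp_rw [hrow]
          rw [Finset.sum_const, Finset.card_univ, Fintype.card_fin, nsmul_eq_mul]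
          field_simp
  -- final computation
  have hrw : ∀ ω,
      ((((n : ℝ) - 1)⁻¹ •
          ((Matrix.of (X ω))ᵀ *
            ((1 : Matrix (Fin n) (Fin n) ℝ) -
              (n : ℝ)⁻¹ • (Matrix.of (fun _ _ => (1 : ℝ)) : Matrix (Fin n) (Fin n) ℝ)) *
            Matrix.of (Y ω)) : Matrix (Fin dx) (Fin dy) ℝ) a b) ^ 2 = c ^ 2 * S ω ^ 2 := by
    intro ω; rw [hentry ω]; ring
  calc ∫ ω, ((((n : ℝ) - 1)⁻¹ •
          ((Matrix.of (X ω))ᵀ *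
            ((1 : Matrix (Fin n) (Fin n) ℝ) -
              (n : ℝ)⁻¹ • (Matrix.of (fun _ _ => (1 : ℝ)) : Matrix (Fin n) (Fin n) ℝ)) *
            Matrix.of (Y ω)) : Matrix (Fin dx) (Fin dy) ℝ) a b) ^ 2 ∂μ
      = ∫ ω, c ^ 2 * S ω ^ 2 ∂μ := integral_congr_ae (Filter.Eventually.of_forall hrw)
    _ = c ^ 2 * ∫ ω, S ω ^ 2 ∂μ := integral_const_mul _ _
    _ = c ^ 2 * ((n : ℝ) - 1) := by rw [hIS2]
    _ = 1 / ((n : ℝ) - 1) := by rw [hc]; field_simp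
end

section
/- Let X ∈ ℝ^{n×d_x} and Y ∈ ℝ^{n×d_y} be random matrices whose rows are i.i.d., with the family of X-rows independent of the family of Y-rows, and assume that for every anchor i the distances {dist(x_i, x_j)}_{j≠i} and {dist(y_i, y_j)}_{j≠i} are almost surely pairwise distinct. For k < n define the mutual k-NN overlap mKNN(X,Y) = (1/n) Σ_{i=1}^n |N_X(i) ∩ N_Y(i)|/k, where N_X(i) and N_Y(i) are the k-nearest-neighbor index sets of anchor i in X and in Y. Then E[mKNN(X,Y)] = k/(n−1). -/
open MeasureTheory ProbabilityTheory

section KnnAux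

variable {n : ℕ} {V : Type*}

/-- The canonical k-nearest-neighbour index set of anchor `i`. -/
noncomputable def knnAux (k : ℕ) (d : V → V → ℝ) (i : Fin n) (x : Fin n → V) : Finset (Fin n) :=
  Finset.univ.filter (fun j => j ≠ i ∧
    ((Finset.univ.filter (fun j' => j' ≠ i ∧ d (x i) (x j') < d (x i) (x j))).card < k))

lemma mem_knnAux {k : ℕ} {d : V → V → ℝ} {i : Fin n} {x : Fin n → V} {j : Fin n} :
    j ∈ knnAux k d i x ↔ j ≠ i ∧
      ((Finset.univ.filter (fun j' => j' ≠ i ∧ d (x i) (x j') < d (x i) (x j))).card < k) := by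
  simp [knnAux]

lemma knnAux_unique {k : ℕ} {d : V → V → ℝ} {i : Fin n} {x : Fin n → V}
    {S : Finset (Fin n)}
    (h1 : S ⊆ Finset.univ \ {i}) (h2 : S.card = k)
    (h3 : ∀ j ∈ S, ∀ j' : Fin n, j' ∉ S → j' ≠ i →
      d (x i) (x j) < d (x i) (x j')) : S = knnAux k d i x := by
  have hni : ∀ j ∈ S, j ≠ i := by
    intro j hj
    have := h1 hj
    simp only [Finset.mem_sdiff, Finset.mem_singleton] at this
    exact this.2
  ext j
  rw [mem_knnAux]
  constructor
  · intro hj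
    refine ⟨hni j hj, ?_⟩
    have hsub : (Finset.univ.filter (fun j' => j' ≠ i ∧ d (x i) (x j') < d (x i) (x j)))
        ⊆ S.erase j := by
      intro j' hj'
      simp only [Finset.mem_filter, Finset.mem_univ, true_and] at hj'
      have hj'S : j' ∈ S := by
        by_contra hns
        exact absurd hj'.2 (not_lt.2 (le_of_lt (h3 j hj j' hns hj'.1)))
      refine Finset.mem_erase.2 ⟨?_, hj'S⟩
      rintro rfl
      exact lt_irrefl _ hj'.2
    calc (Finset.univ.filter (fun j' => j' ≠ i ∧ d (x i) (x j') < d (x i) (x j))).card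
        ≤ (S.erase j).card := Finset.card_le_card hsub
      _ < S.card := Finset.card_erase_lt_of_mem hj
      _ = k := h2
  · rintro ⟨hji, hcard⟩
    by_contra hjS
    have hsub : S ⊆ Finset.univ.filter (fun j' => j' ≠ i ∧ d (x i) (x j') < d (x i) (x j)) := by
      intro m hm
      simp only [Finset.mem_filter, Finset.mem_univ, true_and]
      exact ⟨hni m hm, h3 m hm j hjS hji⟩
    have := Finset.card_le_card hsub
    omega

lemma knnAux_comp_perm {k : ℕ} {d : V → V → ℝ} {i : Fin n} (σ : Equiv.Perm (Fin n))
    (hσi : σ i = i) (x : Fin n → V) {j : Fin n} :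
    j ∈ knnAux k d i (x ∘ σ) ↔ σ j ∈ knnAux k d i x := by
  have hxi : (x ∘ σ) i = x i := by simp [hσi]
  have hne : ∀ m : Fin n, σ m ≠ i ↔ m ≠ i := by
    intro m
    constructor
    · intro h hmi; exact h (hmi ▸ hσi)
    · intro h hmi; exact h (σ.injective (hmi.trans hσi.symm))
  rw [mem_knnAux, mem_knnAux, hxi]
  have hcard : (Finset.univ.filter
        (fun j' => j' ≠ i ∧ d (x i) ((x ∘ σ) j') < d (x i) ((x ∘ σ) j))).card
      = (Finset.univ.filter (fun j' => j' ≠ i ∧ d (x i) (x j') < d (x i) (x (σ j)))).card := by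
    apply Finset.card_bij (fun a _ => σ a)
    · intro a ha
      simp only [Finset.mem_filter, Finset.mem_univ, true_and, Function.comp_apply] at ha ⊢
      exact ⟨(hne a).2 ha.1, ha.2⟩
    · intro a ha b hb hab
      exact σ.injective hab
    · intro b hb
      simp only [Finset.mem_filter, Finset.mem_univ, true_and, Function.comp_apply] at hb ⊢
      exact ⟨σ.symm b, ⟨by rw [← hne, Equiv.apply_symm_apply]; exact hb.1,
        by rw [Equiv.apply_symm_apply]; exact hb.2⟩, (Equiv.apply_symm_apply σ b)⟩
  rw [hcard, hne j]

lemma knnAux_measurable {dV : ℕ} {k : ℕ} {d : (Fin dV → ℝ) → (Fin dV → ℝ) → ℝ}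
    (hd : Measurable (Function.uncurry d)) (i j : Fin n) :
    MeasurableSet {x : Fin n → Fin dV → ℝ | j ∈ knnAux k d i x} := by
  classical
  have hdist : ∀ a b : Fin n, Measurable (fun x : Fin n → Fin dV → ℝ => d (x a) (x b)) := by
    intro a b
    exact hd.comp (Measurable.prodMk (measurable_pi_apply a) (measurable_pi_apply b))
  have hrank : Measurable (fun x : Fin n → Fin dV → ℝ =>
      (Finset.univ.filter (fun j' => j' ≠ i ∧ d (x i) (x j') < d (x i) (x j))).card) := by
    simp only [Finset.card_filter]
    apply Finset.measurable_sum
    intro j' _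
    have : (fun x : Fin n → Fin dV → ℝ =>
        if j' ≠ i ∧ d (x i) (x j') < d (x i) (x j) then 1 else 0)
        = fun x => if j' ≠ i then (if d (x i) (x j') < d (x i) (x j) then 1 else 0) else 0 := by
      funext x
      by_cases hj' : j' = i <;> simp [hj']
    rw [this]
    split
    · exact Measurable.ite (measurableSet_lt (hdist i j') (hdist i j))
        measurable_const measurable_const
    · exact measurable_const
  have : {x : Fin n → Fin dV → ℝ | j ∈ knnAux k d i x}
      = (if j = i then (∅ : Set (Fin n → Fin dV → ℝ)) else
          (fun x : Fin n → Fin dV → ℝ =>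
            (Finset.univ.filter (fun j' => j' ≠ i ∧ d (x i) (x j') < d (x i) (x j))).card)
            ⁻¹' (Set.Iio k)) := by
    ext x
    by_cases hji : j = i <;> simp [mem_knnAux, hji]
  rw [this]
  split
  · exact MeasurableSet.empty
  · exact hrank (by trivial)

lemma knnAux_not_mem_self {k : ℕ} {d : V → V → ℝ} {i : Fin n} {x : Fin n → V} :
    i ∉ knnAux k d i x := by
  simp [mem_knnAux]

end KnnAux

lemma law_perm_invariant {Ω : Type*} [MeasurableSpace Ω] (μ : Measure Ω)
    [IsProbabilityMeasure μ] {n dV : ℕ}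
    (X : Ω → Fin n → Fin dV → ℝ) (hXmeas : Measurable X)
    (hX_indep : iIndepFun (fun i ω => X ω i) μ)
    (hX_ident : ∀ i j : Fin n, IdentDistrib (fun ω => X ω i) (fun ω => X ω j) μ μ)
    (σ : Equiv.Perm (Fin n)) {A : Set (Fin n → Fin dV → ℝ)} (hA : MeasurableSet A) :
    μ (X ⁻¹' ((fun x => x ∘ σ.symm) ⁻¹' A)) = μ (X ⁻¹' A) := by
  have hXl : ∀ l : Fin n, Measurable (fun ω => X ω l) := fun l =>
    (measurable_pi_apply l).comp hXmeas
  set m : Fin n → Measure (Fin dV → ℝ) := fun l => μ.map (fun ω => X ω l) with hm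
  haveI : ∀ l, IsProbabilityMeasure (m l) := fun l =>
    Measure.isProbabilityMeasure_map (hXl l).aemeasurable
  haveI : ∀ l, SigmaFinite (m l) := fun l => inferInstance
  have hlaw : μ.map X = Measure.pi m := by
    refine (Measure.pi_eq fun s hs => ?_).symm
    rw [Measure.map_apply hXmeas (MeasurableSet.univ_pi hs)]
    have hpre : X ⁻¹' (Set.pi Set.univ s) = ⋂ l ∈ (Finset.univ : Finset (Fin n)),
        (fun ω => X ω l) ⁻¹' (s l) := by
      ext ω; simp [Set.mem_pi]
    rw [hpre, hX_indep.measure_inter_preimage_eq_mul Finset.univ (fun l _ => hs l)]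
    exact Finset.prod_congr rfl fun l _ =>
      (Measure.map_apply (hXl l) (hs l)).symm
  have hmp : MeasurePreserving
      (MeasurableEquiv.arrowCongr' σ (MeasurableEquiv.refl (Fin dV → ℝ)))
      (Measure.pi m) (Measure.pi m) := by
    refine MeasureTheory.measurePreserving_arrowCongr' m m σ
      (MeasurableEquiv.refl _) (fun l => ?_)
    refine ⟨measurable_id', ?_⟩
    have : m l = m (σ l) := (hX_ident l (σ l)).map_eq
    simpa [MeasurableEquiv.refl] using this
  have hcoe : (⇑(MeasurableEquiv.arrowCongr' σ (MeasurableEquiv.refl (Fin dV → ℝ))))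
      = fun x : Fin n → Fin dV → ℝ => x ∘ σ.symm := by
    funext x
    rfl
  have h1 : μ (X ⁻¹' ((fun x => x ∘ σ.symm) ⁻¹' A)) = μ.map X ((fun x => x ∘ σ.symm) ⁻¹' A) := by
    rw [Measure.map_apply hXmeas]
    rw [← hcoe]
    exact (MeasurableEquiv.arrowCongr' σ (MeasurableEquiv.refl _)).measurable hA
  rw [h1, hlaw, ← hcoe, hmp.measure_preimage hA.nullMeasurableSet, ← hlaw,
    Measure.map_apply hXmeas hA]

/-- **Null baseline for mutual k-NN.**
Let `X ∈ ℝ^{n×dx}` and `Y ∈ ℝ^{n×dy}` be random matrices whose rows are i.i.d., with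
the family of `X`-rows independent of the family of `Y`-rows, such that the distances
from each anchor are almost surely pairwise distinct.  For `k < n`, letting `NX i` and
`NY i` denote the `k`-nearest-neighbour index sets of anchor `i` in `X` and in `Y`,
the mutual k-NN overlap `mKNN(X,Y) = (1/n) ∑ᵢ |NX i ∩ NY i| / k` satisfies
`E[mKNN(X,Y)] = k / (n−1)`. -/
theorem mknn_null_expectation
    {Ω : Type*} [MeasurableSpace Ω] (μ : Measure Ω) [IsProbabilityMeasure μ]
    (n dx dy k : ℕ) (hk : k < n)
    (X : Ω → Fin n → Fin dx → ℝ) (Y : Ω → Fin n → Fin dy → ℝ)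
    (hXmeas : Measurable X) (hYmeas : Measurable Y)
    -- the rows of X are i.i.d.
    (hX_indep : iIndepFun (fun i ω => X ω i) μ)
    (hX_ident : ∀ i j : Fin n, IdentDistrib (fun ω => X ω i) (fun ω => X ω j) μ μ)
    -- the rows of Y are i.i.d.
    (hY_indep : iIndepFun (fun i ω => Y ω i) μ)
    (hY_ident : ∀ i j : Fin n, IdentDistrib (fun ω => Y ω i) (fun ω => Y ω j) μ μ)
    -- the family of X-rows is independent of the family of Y-rows
    (hXY : IndepFun X Y μ)
    -- fixed measurable distance functions
    (distX : (Fin dx → ℝ) → (Fin dx → ℝ) → ℝ) (hdistX : Measurable (Function.uncurry distX))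
    (distY : (Fin dy → ℝ) → (Fin dy → ℝ) → ℝ) (hdistY : Measurable (Function.uncurry distY))
    -- distances from each anchor are almost surely pairwise distinct
    (hX_distinct : ∀ᵐ ω ∂μ, ∀ i j j' : Fin n, j ≠ i → j' ≠ i → j ≠ j' →
      distX (X ω i) (X ω j) ≠ distX (X ω i) (X ω j'))
    (hY_distinct : ∀ᵐ ω ∂μ, ∀ i j j' : Fin n, j ≠ i → j' ≠ i → j ≠ j' →
      distY (Y ω i) (Y ω j) ≠ distY (Y ω i) (Y ω j'))
    -- `NX i` and `NY i` are the k-nearest-neighbour index sets of anchor `i`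
    (NX NY : Fin n → Ω → Finset (Fin n))
    (hNXmeas : ∀ (i : Fin n) (S : Finset (Fin n)), MeasurableSet {ω | NX i ω = S})
    (hNYmeas : ∀ (i : Fin n) (S : Finset (Fin n)), MeasurableSet {ω | NY i ω = S})
    (hNX : ∀ i : Fin n, ∀ᵐ ω ∂μ,
      NX i ω ⊆ Finset.univ \ {i} ∧ (NX i ω).card = k ∧
        ∀ j ∈ NX i ω, ∀ j' : Fin n, j' ∉ NX i ω → j' ≠ i →
          distX (X ω i) (X ω j) < distX (X ω i) (X ω j'))
    (hNY : ∀ i : Fin n, ∀ᵐ ω ∂μ,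
      NY i ω ⊆ Finset.univ \ {i} ∧ (NY i ω).card = k ∧
        ∀ j ∈ NY i ω, ∀ j' : Fin n, j' ∉ NY i ω → j' ≠ i →
          distY (Y ω i) (Y ω j) < distY (Y ω i) (Y ω j')) :
    ∫ ω, (n : ℝ)⁻¹ * ∑ i : Fin n, ((NX i ω ∩ NY i ω).card : ℝ) / (k : ℝ) ∂μ
      = (k : ℝ) / ((n : ℝ) - 1) := by
  classical
  rcases Nat.eq_zero_or_pos k with hk0 | hkpos
  · subst hk0
    simp
  -- main case: 1 ≤ k < n
  have hn2 : 2 ≤ n := by omega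
  have hnR : ((n : ℝ) - 1) ≠ 0 := by
    have : (2 : ℝ) ≤ (n : ℝ) := by exact_mod_cast hn2
    linarith
  have hknR : ((n : ℝ)) ≠ 0 := by positivity
  have hkR : ((k : ℝ)) ≠ 0 := by
    simp only [ne_eq, Nat.cast_eq_zero]; omega
  -- the measurable event sets
  set A : Fin n → Fin n → Set (Fin n → Fin dx → ℝ) :=
    fun i j => {x | j ∈ knnAux k distX i x} with hA
  set B : Fin n → Fin n → Set (Fin n → Fin dy → ℝ) :=
    fun i j => {x | j ∈ knnAux k distY i x} with hB
  have hAm : ∀ i j, MeasurableSet (A i j) := fun i j => knnAux_measurable hdistX i j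
  have hBm : ∀ i j, MeasurableSet (B i j) := fun i j => knnAux_measurable hdistY i j
  set E : Fin n → Fin n → Set Ω := fun i j => X ⁻¹' A i j ∩ Y ⁻¹' B i j with hE
  have hEm : ∀ i j, MeasurableSet (E i j) :=
    fun i j => (hXmeas (hAm i j)).inter (hYmeas (hBm i j))
  -- a.e. identification of NX, NY with the canonical kNN sets
  have hNXae : ∀ i, ∀ᵐ ω ∂μ, NX i ω = knnAux k distX i (X ω) := fun i =>
    (hNX i).mono fun ω h => knnAux_unique h.1 h.2.1 h.2.2
  have hNYae : ∀ i, ∀ᵐ ω ∂μ, NY i ω = knnAux k distY i (Y ω) := fun i =>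
    (hNY i).mono fun ω h => knnAux_unique h.1 h.2.1 h.2.2
  -- Step 1: rewrite the integrand a.e. as a sum of indicators
  have hptwise : (fun ω => (n:ℝ)⁻¹ * ∑ i : Fin n, ((NX i ω ∩ NY i ω).card : ℝ)/(k:ℝ))
      =ᵐ[μ] (fun ω => ((n:ℝ)⁻¹ * (k:ℝ)⁻¹) *
        ∑ i : Fin n, ∑ j : Fin n, (E i j).indicator (fun _ => (1:ℝ)) ω) := by
    filter_upwards [MeasureTheory.ae_all_iff.2 hNXae, MeasureTheory.ae_all_iff.2 hNYae]
      with ω hx hy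
    have hcard : ∀ i, ((NX i ω ∩ NY i ω).card : ℝ)
        = ∑ j : Fin n, (E i j).indicator (fun _ => (1:ℝ)) ω := by
      intro i
      rw [hx i, hy i]
      have h1 : (knnAux k distX i (X ω) ∩ knnAux k distY i (Y ω))
          = Finset.univ.filter
            (fun j => j ∈ knnAux k distX i (X ω) ∧ j ∈ knnAux k distY i (Y ω)) := by
        ext j; simp [Finset.mem_inter]
      rw [h1, Finset.card_filter]
      push_cast
      refine Finset.sum_congr rfl fun j _ => ?_
      have hmem : ω ∈ E i j ↔ (j ∈ knnAux k distX i (X ω) ∧ j ∈ knnAux k distY i (Y ω)) :=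
        Iff.rfl
      rw [Set.indicator_apply]
      by_cases hj : j ∈ knnAux k distX i (X ω) ∧ j ∈ knnAux k distY i (Y ω)
      · rw [if_pos hj, if_pos (hmem.2 hj)]
      · rw [if_neg hj, if_neg (fun h => hj (hmem.1 h))]
    simp only [hcard]
    rw [Finset.mul_sum, Finset.mul_sum]
    exact Finset.sum_congr rfl fun i _ => by ring
  -- Step 2: compute the integral as a double sum of measures
  have hind_int : ∀ (s : Set Ω), MeasurableSet s →
      Integrable (s.indicator (fun _ => (1:ℝ))) μ := fun s hs =>
    (integrable_const (1:ℝ)).indicator hs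
  have hint : ∫ ω, (n : ℝ)⁻¹ * ∑ i : Fin n, ((NX i ω ∩ NY i ω).card : ℝ) / (k : ℝ) ∂μ
      = ((n:ℝ)⁻¹ * (k:ℝ)⁻¹) * ∑ i : Fin n, ∑ j : Fin n, (μ (E i j)).toReal := by
    rw [integral_congr_ae hptwise, integral_const_mul]
    congr 1
    rw [integral_finset_sum _ (fun i _ =>
      integrable_finset_sum _ (fun j _ => hind_int _ (hEm i j)))]
    refine Finset.sum_congr rfl fun i _ => ?_
    rw [integral_finset_sum _ (fun j _ => hind_int _ (hEm i j))]
    refine Finset.sum_congr rfl fun j _ => ?_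
    rw [integral_indicator_const (1:ℝ) (hEm i j), smul_eq_mul, mul_one]
    rfl
  -- Step 3: independence splits each event's measure
  have hprod : ∀ i j, μ (E i j) = μ (X ⁻¹' A i j) * μ (Y ⁻¹' B i j) := fun i j =>
    hXY.measure_inter_preimage_eq_mul _ _ (hAm i j) (hBm i j)
  -- Step 4: exchangeability
  have hswapX : ∀ (i j j' : Fin n), j ≠ i → j' ≠ i →
      μ (X ⁻¹' A i j) = μ (X ⁻¹' A i j') := by
    intro i j j' hji hj'i
    rcases eq_or_ne j j' with rfl | hjj'
    · rfl
    set σ : Equiv.Perm (Fin n) := Equiv.swap j j' with hσ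
    have hσsymm : σ.symm = σ := by simp [hσ]
    have hσi : σ.symm i = i := by
      rw [hσsymm]
      exact Equiv.swap_apply_of_ne_of_ne (Ne.symm hji) (Ne.symm hj'i)
    have hpre : (fun x : Fin n → Fin dx → ℝ => x ∘ σ.symm) ⁻¹' (A i j') = A i j := by
      ext x
      simp only [Set.mem_preimage, hA, Set.mem_setOf_eq]
      rw [knnAux_comp_perm σ.symm hσi x]
      rw [hσsymm]
      rw [Equiv.swap_apply_right]
    have := law_perm_invariant μ X hXmeas hX_indep hX_ident σ (hAm i j')
    rw [hpre] at this
    exact this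
  have hswapY : ∀ (i j j' : Fin n), j ≠ i → j' ≠ i →
      μ (Y ⁻¹' B i j) = μ (Y ⁻¹' B i j') := by
    intro i j j' hji hj'i
    rcases eq_or_ne j j' with rfl | hjj'
    · rfl
    set σ : Equiv.Perm (Fin n) := Equiv.swap j j' with hσ
    have hσsymm : σ.symm = σ := by simp [hσ]
    have hσi : σ.symm i = i := by
      rw [hσsymm]
      exact Equiv.swap_apply_of_ne_of_ne (Ne.symm hji) (Ne.symm hj'i)
    have hpre : (fun x : Fin n → Fin dy → ℝ => x ∘ σ.symm) ⁻¹' (B i j') = B i j := by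
      ext x
      simp only [Set.mem_preimage, hB, Set.mem_setOf_eq]
      rw [knnAux_comp_perm σ.symm hσi x]
      rw [hσsymm]
      rw [Equiv.swap_apply_right]
    have := law_perm_invariant μ Y hYmeas hY_indep hY_ident σ (hBm i j')
    rw [hpre] at this
    exact this
  -- Step 5: the sum over j ≠ i of the marginal probabilities is k
  have hcard_erase : ∀ i : Fin n, (Finset.univ.erase i).card = n - 1 := by
    intro i
    rw [Finset.card_erase_of_mem (Finset.mem_univ i), Finset.card_univ, Fintype.card_fin]
  have hsumX : ∀ i : Fin n,
      ∑ j ∈ Finset.univ.erase i, (μ (X ⁻¹' A i j)).toReal = (k : ℝ) := by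
    intro i
    have h1 : ∀ j, (μ (X ⁻¹' A i j)).toReal
        = ∫ ω, (X ⁻¹' A i j).indicator (fun _ => (1:ℝ)) ω ∂μ := by
      intro j
      rw [integral_indicator_const (1:ℝ) (hXmeas (hAm i j)), smul_eq_mul, mul_one]
      rfl
    simp only [h1]
    rw [← integral_finset_sum _ (fun j _ => hind_int _ (hXmeas (hAm i j)))]
    have : (fun ω => ∑ j ∈ Finset.univ.erase i,
        (X ⁻¹' A i j).indicator (fun _ => (1:ℝ)) ω) =ᵐ[μ] (fun _ => (k:ℝ)) := by
      filter_upwards [hNXae i, hNX i] with ω he hprops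
      have hsub : knnAux k distX i (X ω) ⊆ Finset.univ.erase i := by
        rw [← he]
        intro j hj
        have := hprops.1 hj
        simp only [Finset.mem_sdiff, Finset.mem_singleton] at this
        exact Finset.mem_erase.2 ⟨this.2, Finset.mem_univ j⟩
      have hkcard : (knnAux k distX i (X ω)).card = k := by
        rw [← he]; exact hprops.2.1
      have hfilter : (Finset.univ.erase i).filter (fun j => j ∈ knnAux k distX i (X ω))
          = knnAux k distX i (X ω) := by
        ext j
        simp only [Finset.mem_filter]
        exact ⟨fun h => h.2, fun h => ⟨hsub h, h⟩⟩
      calc ∑ j ∈ Finset.univ.erase i, (X ⁻¹' A i j).indicator (fun _ => (1:ℝ)) ω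
          = ∑ j ∈ Finset.univ.erase i,
            (if j ∈ knnAux k distX i (X ω) then (1:ℝ) else 0) := by
            refine Finset.sum_congr rfl fun j _ => ?_
            rw [Set.indicator_apply]
            exact if_congr Iff.rfl rfl rfl
        _ = (((Finset.univ.erase i).filter
            (fun j => j ∈ knnAux k distX i (X ω))).card : ℝ) := by
            rw [Finset.card_filter]
            push_cast
            exact Finset.sum_congr rfl fun j _ => if_congr Iff.rfl rfl rfl
        _ = (k : ℝ) := by rw [hfilter, hkcard]
    rw [integral_congr_ae this, integral_const, probReal_univ, one_smul]
  have hsumY : ∀ i : Fin n,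
      ∑ j ∈ Finset.univ.erase i, (μ (Y ⁻¹' B i j)).toReal = (k : ℝ) := by
    intro i
    have h1 : ∀ j, (μ (Y ⁻¹' B i j)).toReal
        = ∫ ω, (Y ⁻¹' B i j).indicator (fun _ => (1:ℝ)) ω ∂μ := by
      intro j
      rw [integral_indicator_const (1:ℝ) (hYmeas (hBm i j)), smul_eq_mul, mul_one]
      rfl
    simp only [h1]
    rw [← integral_finset_sum _ (fun j _ => hind_int _ (hYmeas (hBm i j)))]
    have : (fun ω => ∑ j ∈ Finset.univ.erase i,
        (Y ⁻¹' B i j).indicator (fun _ => (1:ℝ)) ω) =ᵐ[μ] (fun _ => (k:ℝ)) := by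
      filter_upwards [hNYae i, hNY i] with ω he hprops
      have hsub : knnAux k distY i (Y ω) ⊆ Finset.univ.erase i := by
        rw [← he]
        intro j hj
        have := hprops.1 hj
        simp only [Finset.mem_sdiff, Finset.mem_singleton] at this
        exact Finset.mem_erase.2 ⟨this.2, Finset.mem_univ j⟩
      have hkcard : (knnAux k distY i (Y ω)).card = k := by
        rw [← he]; exact hprops.2.1
      have hfilter : (Finset.univ.erase i).filter (fun j => j ∈ knnAux k distY i (Y ω))
          = knnAux k distY i (Y ω) := by
        ext j
        simp only [Finset.mem_filter]
        exact ⟨fun h => h.2, fun h => ⟨hsub h, h⟩⟩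
      calc ∑ j ∈ Finset.univ.erase i, (Y ⁻¹' B i j).indicator (fun _ => (1:ℝ)) ω
          = ∑ j ∈ Finset.univ.erase i,
            (if j ∈ knnAux k distY i (Y ω) then (1:ℝ) else 0) := by
            refine Finset.sum_congr rfl fun j _ => ?_
            rw [Set.indicator_apply]
            exact if_congr Iff.rfl rfl rfl
        _ = (((Finset.univ.erase i).filter
            (fun j => j ∈ knnAux k distY i (Y ω))).card : ℝ) := by
            rw [Finset.card_filter]
            push_cast
            exact Finset.sum_congr rfl fun j _ => if_congr Iff.rfl rfl rfl
        _ = (k : ℝ) := by rw [hfilter, hkcard]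
    rw [integral_congr_ae this, integral_const, probReal_univ, one_smul]
  -- Step 6: each marginal probability is k/(n-1)
  have hvalX : ∀ i : Fin n, ∀ j ∈ Finset.univ.erase i,
      (μ (X ⁻¹' A i j)).toReal = (k : ℝ) / ((n : ℝ) - 1) := by
    intro i j hj
    have hji : j ≠ i := (Finset.mem_erase.1 hj).1
    have hconst : ∀ j' ∈ Finset.univ.erase i,
        (μ (X ⁻¹' A i j')).toReal = (μ (X ⁻¹' A i j)).toReal := by
      intro j' hj'
      rw [hswapX i j' j (Finset.mem_erase.1 hj').1 hji]
    have := hsumX i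
    rw [Finset.sum_congr rfl hconst, Finset.sum_const, hcard_erase i, nsmul_eq_mul] at this
    have hcast : ((n - 1 : ℕ) : ℝ) = (n : ℝ) - 1 := by
      have : (1:ℕ) ≤ n := by omega
      push_cast [this]
      ring
    rw [hcast] at this
    field_simp at this ⊢
    linarith
  have hvalY : ∀ i : Fin n, ∀ j ∈ Finset.univ.erase i,
      (μ (Y ⁻¹' B i j)).toReal = (k : ℝ) / ((n : ℝ) - 1) := by
    intro i j hj
    have hji : j ≠ i := (Finset.mem_erase.1 hj).1
    have hconst : ∀ j' ∈ Finset.univ.erase i,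
        (μ (Y ⁻¹' B i j')).toReal = (μ (Y ⁻¹' B i j)).toReal := by
      intro j' hj'
      rw [hswapY i j' j (Finset.mem_erase.1 hj').1 hji]
    have := hsumY i
    rw [Finset.sum_congr rfl hconst, Finset.sum_const, hcard_erase i, nsmul_eq_mul] at this
    have hcast : ((n - 1 : ℕ) : ℝ) = (n : ℝ) - 1 := by
      have : (1:ℕ) ≤ n := by omega
      push_cast [this]
      ring
    rw [hcast] at this
    field_simp at this ⊢
    linarith
  -- Step 7: assemble
  have hEval : ∀ i : Fin n, ∑ j : Fin n, (μ (E i j)).toReal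
      = ((n:ℝ) - 1) * ((k : ℝ) / ((n : ℝ) - 1))^2 := by
    intro i
    have hii : (μ (E i i)).toReal = 0 := by
      have : E i i = ∅ := by
        apply Set.eq_empty_iff_forall_notMem.2
        intro ω hω
        exact knnAux_not_mem_self (hω.1 : X ω ∈ A i i)
      rw [this]
      simp
    rw [← Finset.sum_erase_add _ _ (Finset.mem_univ i), hii, add_zero]
    have : ∀ j ∈ Finset.univ.erase i, (μ (E i j)).toReal
        = ((k : ℝ) / ((n : ℝ) - 1))^2 := by
      intro j hj
      rw [hprod i j, ENNReal.toReal_mul, hvalX i j hj, hvalY i j hj, sq]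
    rw [Finset.sum_congr rfl this, Finset.sum_const, hcard_erase i, nsmul_eq_mul]
    congr 1
    have : (1:ℕ) ≤ n := by omega
    push_cast [this]
    ring
  rw [hint]
  simp only [hEval]
  rw [Finset.sum_const, Finset.card_univ, Fintype.card_fin, nsmul_eq_mul]
  field_simp
end

section
/- Fix α ∈ (0,1) and K ≥ 1, and let s_obs, s^(1), …, s^(K) be real numbers. Let s_(1) ≤ … ≤ s_(K+1) be the order statistics of the combined multiset {s_obs, s^(1), …, s^(K)}, define τ_α = s_(⌈(1−α)(K+1)⌉), and define p = (1 + #{k : s^(k) ≥ s_obs})/(K+1). Then s_obs > τ_α implies p ≤ α. -/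
/-- **Rejecting above the empirical critical value implies a small p-value.**
Fix `α ∈ (0,1)` and `K ≥ 1`, and let `s_obs, s⁽¹⁾, …, s⁽ᴷ⁾` be real numbers.  Let
`l` be the nondecreasing rearrangement (list of order statistics) of the combined
multiset `{s_obs, s⁽¹⁾, …, s⁽ᴷ⁾}`, let `τ_α` be its `⌈(1−α)(K+1)⌉`-th element
(1-indexed), and let `p = (1 + #{k : s⁽ᵏ⁾ ≥ s_obs}) / (K+1)`.
Then `s_obs > τ_α` implies `p ≤ α`. -/
theorem reject_implies_small_pvalue
    (α : ℝ) (hα0 : 0 < α) (hα1 : α < 1) (K : ℕ) (hK : 1 ≤ K)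
    (sobs : ℝ) (s : Fin K → ℝ)
    -- `l` is the sorted version of the combined multiset
    (l : List ℝ) (hsorted : l.Pairwise (· ≤ ·)) (hperm : l.Perm (sobs :: List.ofFn s))
    -- the observed score exceeds the critical value τ_α
    (hgt : l.getD (⌈(1 - α) * ((K : ℝ) + 1)⌉₊ - 1) 0 < sobs) :
    (1 + ((Finset.univ.filter fun k : Fin K => sobs ≤ s k).card : ℝ)) / ((K : ℝ) + 1)
      ≤ α := by
  set m := ⌈(1 - α) * ((K : ℝ) + 1)⌉₊ with hm
  have hKpos : (0:ℝ) < (K:ℝ) + 1 := by positivity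
  have hposr : (0:ℝ) < (1 - α) * ((K : ℝ) + 1) := by nlinarith
  have hm1 : 1 ≤ m := Nat.one_le_ceil_iff.2 hposr
  have hmle : m ≤ K + 1 := by
    rw [hm, Nat.ceil_le]
    push_cast
    nlinarith
  have hlen : l.length = K + 1 := by
    have := hperm.length_eq
    simpa using this
  have hidx : m - 1 < l.length := by omega
  have hget : l[m-1] < sobs := by
    rwa [List.getD_eq_getElem l 0 hidx] at hgt
  -- every element of l.take m is < sobs
  have htake : ∀ x ∈ l.take m, x < sobs := by
    intro x hx
    rw [List.mem_take_iff_getElem] at hx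
    obtain ⟨i, hi, rfl⟩ := hx
    have hi' : i < l.length := lt_of_lt_of_le (lt_min_iff.1 hi).1 (by omega)
    have him : i ≤ m - 1 := by
      have := (lt_min_iff.1 hi).2; omega
    calc l[i] ≤ l[m-1] := by
          have := hsorted.rel_get_of_le (a := ⟨i, hi'⟩) (b := ⟨m-1, hidx⟩) him
          simpa using this
      _ < sobs := hget
  have hcount : l.countP (fun x => decide (sobs ≤ x)) ≤ l.length - m := by
    have hsplit : l.countP (fun x => decide (sobs ≤ x))
        = (l.take m).countP (fun x => decide (sobs ≤ x))
          + (l.drop m).countP (fun x => decide (sobs ≤ x)) := by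
      rw [← List.countP_append, List.take_append_drop]
    have h0 : (l.take m).countP (fun x => decide (sobs ≤ x)) = 0 := by
      rw [List.countP_eq_zero]
      intro x hx
      simp only [decide_eq_true_eq, not_le]
      exact htake x hx
    have h2 : (l.drop m).countP (fun x => decide (sobs ≤ x)) ≤ (l.drop m).length :=
      List.countP_le_length
    rw [hsplit, h0, Nat.zero_add]
    simpa using h2
  -- relate the countP on l to the Finset card
  have hcard : l.countP (fun x => decide (sobs ≤ x))
      = 1 + (Finset.univ.filter fun k : Fin K => sobs ≤ s k).card := by
    rw [hperm.countP_eq]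
    rw [List.countP_cons]
    simp only [decide_eq_true_eq, le_refl, if_true]
    rw [List.ofFn_eq_map, List.countP_map]
    have hc : (Finset.univ.filter fun k : Fin K => sobs ≤ s k).card
        = (List.finRange K).countP (fun k => decide (sobs ≤ s k)) := by
      rw [List.countP_eq_length_filter, Fin.univ_def]
      rfl
    rw [hc]
    have : ((fun x => decide (sobs ≤ x)) ∘ s) = (fun k => decide (sobs ≤ s k)) := rfl
    rw [this]
    omega
  -- combine
  set N := (Finset.univ.filter fun k : Fin K => sobs ≤ s k).card with hN
  have hkey : 1 + N ≤ K + 1 - m := by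
    rw [← hcard, ← hlen]
    exact hcount
  have hceil : (1 - α) * ((K : ℝ) + 1) ≤ (m : ℝ) := Nat.le_ceil _
  have hcastsub : ((K + 1 - m : ℕ) : ℝ) = ((K : ℝ) + 1) - (m : ℝ) := by
    push_cast [Nat.cast_sub hmle]
    ring
  have hreal : (1 : ℝ) + (N : ℝ) ≤ ((K : ℝ) + 1) - (m : ℝ) := by
    calc (1 : ℝ) + (N : ℝ) = ((1 + N : ℕ) : ℝ) := by push_cast; ring
      _ ≤ ((K + 1 - m : ℕ) : ℝ) := by exact_mod_cast hkey
      _ = ((K : ℝ) + 1) - (m : ℝ) := hcastsub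
  rw [div_le_iff₀ hKpos]
  nlinarith
end

section
/- Let (S_0, S_1, …, S_K) be an exchangeable vector of real random variables, let α ∈ (0,1), and let τ_α = S_(⌈(1−α)(K+1)⌉) denote the ⌈(1−α)(K+1)⌉-th order statistic of the combined multiset {S_0, S_1, …, S_K}. Then P(S_0 > τ_α) ≤ α. -/
open MeasureTheory
open scoped ENNReal

/-- The `r`-th order statistic (1-indexed) of the finite family `v`: the `r`-th
element of the nondecreasing rearrangement of the multiset `{v 0, …, v (N-1)}`. -/
noncomputable def orderStat {N : ℕ} (v : Fin N → ℝ) (r : ℕ) : ℝ :=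
  ((List.ofFn v).insertionSort (· ≤ ·)).getD (r - 1) 0

lemma countP_ofFn {N : ℕ} (v : Fin N → ℝ) (q : ℝ → Prop) [DecidablePred q] :
    (List.ofFn v).countP (fun y => decide (q y)) =
      (Finset.univ.filter (fun j => q (v j))).card := by
  induction N with
  | zero => simp
  | succ n ih =>
    rw [List.ofFn_succ, List.countP_cons, Finset.card_filter, Fin.sum_univ_succ,
      ← Finset.card_filter, ← ih (fun i => v i.succ)]
    by_cases h : q (v 0) <;> simp [h] <;> omega

lemma card_filter_val_lt {N r : ℕ} (h : r ≤ N) :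
    (Finset.univ.filter fun j : Fin N => (j : ℕ) < r).card = r := by
  have : (Finset.univ.filter fun j : Fin N => (j : ℕ) < r) =
      Finset.map (Fin.castLEEmb h) Finset.univ := by
    ext j
    simp only [Finset.mem_filter, Finset.mem_univ, true_and, Finset.mem_map,
      Fin.castLEEmb_apply]
    constructor
    · intro hj; exact ⟨⟨j, hj⟩, rfl⟩
    · rintro ⟨i, -, rfl⟩; exact i.2
  rw [this, Finset.card_map, Finset.card_univ, Fintype.card_fin]

lemma orderStat_lt_iff {N : ℕ} (v : Fin N → ℝ) (x : ℝ) (r : ℕ)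
    (hr1 : 1 ≤ r) (hrN : r ≤ N) :
    orderStat v r < x ↔ r ≤ (Finset.univ.filter fun j => v j < x).card := by
  set l := (List.ofFn v).insertionSort (· ≤ ·) with hl
  have hsorted : l.Pairwise (· ≤ ·) := List.pairwise_insertionSort _ _
  have hperm : l.Perm (List.ofFn v) := List.perm_insertionSort _ _
  have hlen : l.length = N := by rw [hperm.length_eq, List.length_ofFn]
  have hr' : r - 1 < l.length := by omega
  have hcard : (Finset.univ.filter fun j => v j < x).card =
      (Finset.univ.filter fun j : Fin l.length => l.get j < x).card := by
    rw [← countP_ofFn v (fun y => y < x),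
      ← countP_ofFn (fun j => l.get j) (fun y => y < x), List.ofFn_get]
    exact (hperm.countP_eq _).symm
  have hτ : orderStat v r = l.get ⟨r - 1, hr'⟩ := by
    rw [orderStat, ← hl, List.getD_eq_getElem _ _ hr']
    rfl
  rw [hτ, hcard]
  constructor
  · intro hlt
    have hsub : (Finset.univ.filter fun j : Fin l.length => (j : ℕ) < r) ⊆
        (Finset.univ.filter fun j : Fin l.length => l.get j < x) := by
      intro j hj
      simp only [Finset.mem_filter, Finset.mem_univ, true_and] at hj ⊢
      calc l.get j ≤ l.get ⟨r - 1, hr'⟩ := hsorted.rel_get_of_le (by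
              simp [Fin.le_def]; omega)
        _ < x := hlt
    calc r = (Finset.univ.filter fun j : Fin l.length => (j : ℕ) < r).card :=
          (card_filter_val_lt (by omega)).symm
      _ ≤ _ := Finset.card_le_card hsub
  · intro hle
    by_contra hnot
    push_neg at hnot
    have hsub : (Finset.univ.filter fun j : Fin l.length => l.get j < x) ⊆
        (Finset.univ.filter fun j : Fin l.length => (j : ℕ) < r - 1) := by
      intro j hj
      simp only [Finset.mem_filter, Finset.mem_univ, true_and] at hj ⊢
      by_contra hge
      push_neg at hge
      have : l.get ⟨r - 1, hr'⟩ ≤ l.get j := hsorted.rel_get_of_le (by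
        simp [Fin.le_def]; omega)
      linarith
    have := (Finset.card_le_card hsub).trans_eq (card_filter_val_lt (by omega))
    omega

lemma card_rank_le {N r : ℕ} (hr1 : 1 ≤ r) (hrN : r ≤ N) (v : Fin N → ℝ) :
    (Finset.univ.filter fun i =>
      r ≤ (Finset.univ.filter fun j => v j < v i).card).card ≤ N - r := by
  have hcongr : (Finset.univ.filter fun i =>
      r ≤ (Finset.univ.filter fun j => v j < v i).card) =
      (Finset.univ.filter fun i => orderStat v r < v i) := by
    apply Finset.filter_congr
    intro i _
    simp [orderStat_lt_iff v (v i) r hr1 hrN]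
  rw [hcongr]
  set τ := orderStat v r with hτdef
  set l := (List.ofFn v).insertionSort (· ≤ ·) with hl
  have hsorted : l.Pairwise (· ≤ ·) := List.pairwise_insertionSort _ _
  have hperm : l.Perm (List.ofFn v) := List.perm_insertionSort _ _
  have hlen : l.length = N := by rw [hperm.length_eq, List.length_ofFn]
  have hr' : r - 1 < l.length := by omega
  have hτ : τ = l.get ⟨r - 1, hr'⟩ := by
    rw [hτdef, orderStat, ← hl, List.getD_eq_getElem _ _ hr']; rfl
  have hcard : (Finset.univ.filter fun i => τ < v i).card =
      (Finset.univ.filter fun j : Fin l.length => τ < l.get j).card := by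
    rw [← countP_ofFn v (fun y => τ < y),
      ← countP_ofFn (fun j => l.get j) (fun y => τ < y), List.ofFn_get]
    exact (hperm.countP_eq _).symm
  rw [hcard]
  have hsub : (Finset.univ.filter fun j : Fin l.length => τ < l.get j) ⊆
      (Finset.univ.filter fun j : Fin l.length => ¬ ((j : ℕ) < r)) := by
    intro j hj
    simp only [Finset.mem_filter, Finset.mem_univ, true_and] at hj ⊢
    intro hjr
    have : l.get j ≤ l.get ⟨r - 1, hr'⟩ := hsorted.rel_get_of_le (by
      simp [Fin.le_def]; omega)
    rw [← hτ] at this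
    linarith
  have htotal := Finset.card_filter_add_card_filter_not
    (s := (Finset.univ : Finset (Fin l.length))) (p := fun j => (j : ℕ) < r)
  have h1 : (Finset.univ.filter fun j : Fin l.length => (j : ℕ) < r).card = r :=
    card_filter_val_lt (by omega)
  have h2 := Finset.card_le_card hsub
  simp only [Finset.card_univ, Fintype.card_fin] at htotal
  omega

lemma card_filter_comp_equiv {N : ℕ} (π : Equiv.Perm (Fin N)) (p : Fin N → Prop)
    [DecidablePred p] :
    (Finset.univ.filter fun j => p (π j)).card = (Finset.univ.filter p).card := by
  apply Finset.card_bij' (fun j _ => π j) (fun j _ => π.symm j)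
  · intro j hj; simp_all
  · intro j hj; simp_all
  · intro j hj; simp
  · intro j hj; simp

/-- **Type-I control for the empirical critical value.**
Let `(S₀, S₁, …, S_K)` be an exchangeable vector of real random variables, let
`α ∈ (0,1)`, and let `τ_α` denote the `⌈(1−α)(K+1)⌉`-th order statistic of the
combined multiset `{S₀, S₁, …, S_K}`.  Then `P(S₀ > τ_α) ≤ α`. -/
theorem critical_value_type1
    {Ω : Type*} [MeasurableSpace Ω] (P : Measure Ω) [IsProbabilityMeasure P]
    (K : ℕ) (S : Ω → Fin (K + 1) → ℝ) (hSmeas : Measurable S)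
    -- exchangeability of the vector (S₀,…,S_K)
    (hexch : ∀ π : Equiv.Perm (Fin (K + 1)),
      Measure.map (fun ω => fun j => S ω (π j)) P = Measure.map S P)
    (α : ℝ) (hα0 : 0 < α) (hα1 : α < 1) :
    P {ω | orderStat (S ω) ⌈(1 - α) * ((K : ℝ) + 1)⌉₊ < S ω 0}
      ≤ ENNReal.ofReal α := by
  set r := ⌈(1 - α) * ((K : ℝ) + 1)⌉₊ with hrdef
  have hr1 : 1 ≤ r := Nat.ceil_pos.mpr (by nlinarith)
  have hrN : r ≤ K + 1 := by
    rw [hrdef]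
    apply Nat.ceil_le.mpr
    push_cast
    nlinarith
  -- the measurable event in the product space
  set B : Set (Fin (K + 1) → ℝ) :=
    {v | r ≤ (Finset.univ.filter fun j => v j < v 0).card} with hB
  have hmeasB : ∀ i : Fin (K + 1), MeasurableSet
      {v : Fin (K + 1) → ℝ | r ≤ (Finset.univ.filter fun j => v j < v i).card} := by
    intro i
    have hcount : Measurable fun v : Fin (K + 1) → ℝ =>
        (Finset.univ.filter fun j => v j < v i).card := by
      simp only [Finset.card_filter]
      apply Finset.measurable_sum
      intro j _
      exact Measurable.ite (measurableSet_lt (measurable_pi_apply j)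
        (measurable_pi_apply i)) measurable_const measurable_const
    exact hcount (measurableSet_Ici (a := r))
  -- the events in Ω
  set A : Fin (K + 1) → Set Ω := fun i =>
    {ω | r ≤ (Finset.univ.filter fun j => S ω j < S ω i).card} with hA
  have hApre : ∀ i, A i = S ⁻¹'
      {v : Fin (K + 1) → ℝ | r ≤ (Finset.univ.filter fun j => v j < v i).card} := by
    intro i; rfl
  have hmeasA : ∀ i, MeasurableSet (A i) := by
    intro i; rw [hApre]; exact hSmeas (hmeasB i)
  -- exchangeability: all A i have the same probability
  have hsame : ∀ i : Fin (K + 1), P (A i) = P (A 0) := by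
    intro i
    set π := Equiv.swap (0 : Fin (K + 1)) i with hπ
    have hπ0 : π 0 = i := Equiv.swap_apply_left 0 i
    have hm1 : Measurable fun ω => fun j => S ω (π j) := by
      apply measurable_pi_iff.mpr
      intro j
      exact (measurable_pi_apply (π j)).comp hSmeas
    have key := congrArg (fun μ => μ B) (hexch π)
    rw [Measure.map_apply hm1 (hmeasB 0), Measure.map_apply hSmeas (hmeasB 0)] at key
    have h1 : (fun ω => fun j => S ω (π j)) ⁻¹' B = A i := by
      ext ω
      simp only [hB, Set.mem_preimage, Set.mem_setOf_eq, hA, hπ0]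
      rw [card_filter_comp_equiv π (fun j => S ω j < S ω i)]
    rw [h1] at key
    exact key
  -- sum of probabilities bounded by N - r
  have hsum : ((K + 1 : ℕ) : ℝ≥0∞) * P (A 0) ≤ ((K + 1 - r : ℕ) : ℝ≥0∞) := by
    have h1 : ∑ i : Fin (K + 1), P (A i) = ((K + 1 : ℕ) : ℝ≥0∞) * P (A 0) := by
      simp [hsame, Finset.card_univ]
    have h2 : ∑ i : Fin (K + 1), P (A i) =
        ∫⁻ ω, ∑ i : Fin (K + 1), (A i).indicator (fun _ => (1 : ℝ≥0∞)) ω ∂P := by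
      rw [lintegral_finset_sum]
      · congr 1
        ext i
        rw [lintegral_indicator (hmeasA i)]
        simp
      · intro i _
        exact measurable_const.indicator (hmeasA i)
    have h3 : ∀ ω, ∑ i : Fin (K + 1), (A i).indicator (fun _ => (1 : ℝ≥0∞)) ω ≤
        ((K + 1 - r : ℕ) : ℝ≥0∞) := by
      intro ω
      have heq : ∑ i : Fin (K + 1), (A i).indicator (fun _ => (1 : ℝ≥0∞)) ω =
          ((Finset.univ.filter fun i => ω ∈ A i).card : ℝ≥0∞) := by
        rw [Finset.card_filter]
        push_cast
        apply Finset.sum_congr rfl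
        intro i _
        by_cases h : ω ∈ A i <;> simp [h, Set.indicator]
      rw [heq]
      have hcard : (Finset.univ.filter fun i => ω ∈ A i).card ≤ K + 1 - r := by
        have := card_rank_le hr1 hrN (S ω)
        simpa [hA] using this
      exact_mod_cast hcard
    calc ((K + 1 : ℕ) : ℝ≥0∞) * P (A 0) = ∑ i : Fin (K + 1), P (A i) := h1.symm
      _ = ∫⁻ ω, ∑ i : Fin (K + 1), (A i).indicator (fun _ => (1 : ℝ≥0∞)) ω ∂P := h2
      _ ≤ ∫⁻ (ω : Ω), ((K + 1 - r : ℕ) : ℝ≥0∞) ∂P := lintegral_mono fun ω => h3 ω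
      _ = ((K + 1 - r : ℕ) : ℝ≥0∞) := by simp
  -- conclude
  have hset : {ω | orderStat (S ω) r < S ω 0} = A 0 := by
    ext ω
    simp only [Set.mem_setOf_eq, hA]
    exact orderStat_lt_iff (S ω) (S ω 0) r hr1 hrN
  rw [hset]
  have hbound : ((K + 1 - r : ℕ) : ℝ≥0∞) ≤ ((K + 1 : ℕ) : ℝ≥0∞) * ENNReal.ofReal α := by
    have hreal : ((K + 1 - r : ℕ) : ℝ) ≤ ((K + 1 : ℕ) : ℝ) * α := by
      have hceil : (1 - α) * ((K : ℝ) + 1) ≤ (r : ℝ) := Nat.le_ceil _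
      have : ((K + 1 - r : ℕ) : ℝ) = ((K + 1 : ℕ) : ℝ) - (r : ℝ) := by
        push_cast [Nat.cast_sub hrN]; ring
      rw [this]
      push_cast
      nlinarith
    calc ((K + 1 - r : ℕ) : ℝ≥0∞) = ENNReal.ofReal ((K + 1 - r : ℕ) : ℝ) := by
          rw [ENNReal.ofReal_natCast]
      _ ≤ ENNReal.ofReal (((K + 1 : ℕ) : ℝ) * α) := ENNReal.ofReal_le_ofReal hreal
      _ = ((K + 1 : ℕ) : ℝ≥0∞) * ENNReal.ofReal α := by
          rw [ENNReal.ofReal_mul (by positivity), ENNReal.ofReal_natCast]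
  have hfinal : ((K + 1 : ℕ) : ℝ≥0∞) * P (A 0) ≤ ((K + 1 : ℕ) : ℝ≥0∞) * ENNReal.ofReal α :=
    hsum.trans hbound
  have hN0 : ((K + 1 : ℕ) : ℝ≥0∞) ≠ 0 := by simp
  have hNtop : ((K + 1 : ℕ) : ℝ≥0∞) ≠ ⊤ := ENNReal.natCast_ne_top (K + 1)
  exact (ENNReal.mul_le_mul_iff_right hN0 hNtop).mp hfinal
end
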